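/- arXiv:1410.7384 — 2 statements merged into one kernel-verified Lean document; each statement's English description precedes it below -/
import Mathlib

section
/- There exists an absolute constant A > 0 with the following property. Let s₀ ∈ ℂ, r > 0 and M > 1. Suppose f is analytic on an open set containing the closed disk {s ∈ ℂ : |s − s₀| ≤ r}, that f(s₀) ≠ 0, and that |f(s)| ≤ e^M · |f(s₀)| for all s with |s − s₀| ≤ r. Then for every s with |s − s₀| ≤ r/4 at which f(s) ≠ 0 one has |f′(s)/f(s) − Σ_ρ m_ρ/(s − ρ)| < A·M/r, where the sum runs over the zeros ρ of f with |ρ − s₀| ≤ r/2 and m_ρ denotes the order of the zero ρ. -/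
/-!
Divide `f` by `P s = ∏ (s - ρ) ^ m_ρ` over its zeros `ρ` with `‖ρ - s₀‖ ≤ r / 2`. On the circle
`‖s - s₀‖ = r` every factor satisfies `‖s - ρ‖ ≥ r / 2 ≥ ‖s₀ - ρ‖`, so `‖P s₀‖ ≤ ‖P s‖` there and
the maximum modulus principle gives `‖F‖ ≤ e^M ‖F s₀‖` for the quotient `F = f / P`, which has no
zeros in `‖s - s₀‖ < r / 2`. On that disk `F = F s₀ · exp h` with `h s₀ = 0` and `Re h ≤ M`;
Borel–Carathéodory bounds `h` by `6 M` on a slightly smaller disk, and Cauchy's estimate then bounds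
`h' = F' / F` by `96 M / r` on `‖s - s₀‖ ≤ r / 4`. Finally `f' / f = ∑ m_ρ / (s - ρ) + F' / F`.
-/

open Complex Filter

/-- The order (multiplicity) of a zero `z` of an analytic function `f`: the unique `m ∈ ℕ`
such that `f s = (s - z) ^ m * g s` near `z` with `g` analytic at `z` and `g z ≠ 0`. -/
noncomputable def zeroOrder (f : ℂ → ℂ) (z : ℂ) : ℕ :=
  sInf {m : ℕ | ∃ g : ℂ → ℂ, AnalyticAt ℂ g z ∧ g z ≠ 0 ∧
    ∀ᶠ w in nhds z, f w = (w - z) ^ m * g w}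

open Metric Set Topology

-- Both sides are `0` when `f` is not analytic at `z` or vanishes near `z`.
theorem zeroOrder_eq_analyticOrderNatAt (f : ℂ → ℂ) (z : ℂ) :
    zeroOrder f z = analyticOrderNatAt f z := by
  have hset : {m : ℕ | ∃ g : ℂ → ℂ, AnalyticAt ℂ g z ∧ g z ≠ 0 ∧
      ∀ᶠ w in 𝓝 z, f w = (w - z) ^ m * g w} =
      {m : ℕ | AnalyticAt ℂ f z ∧ analyticOrderAt f z = m} := by
    ext m
    simp only [mem_ofPred_eq, ← smul_eq_mul]
    constructor
    · rintro ⟨g, hg, hgz, hfg⟩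
      have hf : AnalyticAt ℂ f z :=
        (((analyticAt_id.sub analyticAt_const).pow m).smul hg).congr (EventuallyEq.symm hfg)
      exact ⟨hf, hf.analyticOrderAt_eq_natCast.2 ⟨g, hg, hgz, hfg⟩⟩
    · rintro ⟨hf, hm⟩
      exact hf.analyticOrderAt_eq_natCast.1 hm
  rw [zeroOrder, hset]
  by_cases hf : AnalyticAt ℂ f z
  · cases h : analyticOrderAt f z with
    | top => simp [h, analyticOrderNatAt]
    | coe n => simp [h, hf, analyticOrderNatAt]
  · simp [hf]

section

variable {𝕜 : Type*} [NontriviallyNormedField 𝕜] {f : 𝕜 → 𝕜}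

theorem AnalyticOnNhd.exists_eq_pow_analyticOrderNatAt_mul {V : Set 𝕜}
    (hf : AnalyticOnNhd 𝕜 f V) {ρ : 𝕜} (hρ : ρ ∈ V) (hfρ : analyticOrderAt f ρ ≠ ⊤) :
    ∃ g : 𝕜 → 𝕜, AnalyticOnNhd 𝕜 g V ∧ g ρ ≠ 0 ∧
      ∀ z, f z = (z - ρ) ^ analyticOrderNatAt f ρ * g z := by
  classical
  obtain ⟨g₀, hg₀, hg₀ρ, hfg₀⟩ := (hf ρ hρ).analyticOrderAt_ne_top.1 hfρ
  simp only [smul_eq_mul] at hfg₀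
  set n := analyticOrderNatAt f ρ
  set g := Function.update (fun z ↦ f z / (z - ρ) ^ n) ρ (g₀ ρ)
  have hg_ne : ∀ z ≠ ρ, g z = f z / (z - ρ) ^ n := fun z hz ↦ Function.update_of_ne hz ..
  have hgg₀ : g =ᶠ[𝓝 ρ] g₀ := by
    filter_upwards [hfg₀] with z hz
    rcases eq_or_ne z ρ with rfl | hzρ
    · simp [g]
    · rw [hg_ne z hzρ, hz, mul_div_cancel_left₀ _ (pow_ne_zero _ (sub_ne_zero.2 hzρ))]
  refine ⟨g, fun x hx ↦ ?_, by simpa [g] using hg₀ρ, fun z ↦ ?_⟩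
  · rcases eq_or_ne x ρ with rfl | hxρ
    · exact hg₀.congr hgg₀.symm
    · refine ((hf x hx).div ((analyticAt_id.sub analyticAt_const).pow n)
        (pow_ne_zero _ (sub_ne_zero.2 hxρ))).congr ?_
      filter_upwards [isOpen_ne.mem_nhds hxρ] with z hz using (hg_ne z hz).symm
  · rcases eq_or_ne z ρ with rfl | hzρ
    · simpa [g] using hfg₀.self_of_nhds
    · rw [hg_ne z hzρ, mul_div_cancel₀ _ (pow_ne_zero _ (sub_ne_zero.2 hzρ))]

theorem analyticOrderAt_mul_eq_right_of_ne_zero {u g : 𝕜 → 𝕜} {z : 𝕜} (hu : AnalyticAt 𝕜 u z)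
    (huz : u z ≠ 0) (hg : AnalyticAt 𝕜 g z) :
    analyticOrderAt (u * g) z = analyticOrderAt g z := by
  rw [analyticOrderAt_mul hu hg, hu.analyticOrderAt_eq_zero.2 huz, zero_add]

theorem AnalyticOnNhd.exists_eq_prod_pow_analyticOrderNatAt_mul {V : Set 𝕜}
    (hf : AnalyticOnNhd 𝕜 f V) (T : Finset 𝕜) (hTV : ↑T ⊆ V)
    (hT : ∀ ρ ∈ T, analyticOrderAt f ρ ≠ ⊤) :
    ∃ F : 𝕜 → 𝕜, AnalyticOnNhd 𝕜 F V ∧ (∀ ρ ∈ T, F ρ ≠ 0) ∧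
      ∀ z, f z = (∏ ρ ∈ T, (z - ρ) ^ analyticOrderNatAt f ρ) * F z := by
  classical
  induction T using Finset.induction_on generalizing f with
  | empty => exact ⟨f, hf, by simp, by simp⟩
  | insert ρ₀ T hρ₀ ih =>
    rw [Finset.coe_insert, insert_subset_iff] at hTV
    obtain ⟨g, hg, hgρ₀, hfg⟩ :=
      hf.exists_eq_pow_analyticOrderNatAt_mul hTV.1 (hT ρ₀ (Finset.mem_insert_self ..))
    have hord : ∀ ρ ∈ T, analyticOrderAt f ρ = analyticOrderAt g ρ := fun ρ hρ ↦ by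
      rw [show f = (fun z ↦ (z - ρ₀) ^ analyticOrderNatAt f ρ₀) * g from funext hfg]
      exact analyticOrderAt_mul_eq_right_of_ne_zero (by fun_prop)
        (pow_ne_zero _ (sub_ne_zero.2 (ne_of_mem_of_not_mem hρ hρ₀))) (hg ρ (hTV.2 hρ))
    obtain ⟨F, hF, hFT, hgF⟩ := ih hg hTV.2 fun ρ hρ ↦
      hord ρ hρ ▸ hT ρ (Finset.mem_insert_of_mem hρ)
    refine ⟨F, hF, ?_, fun z ↦ ?_⟩
    · simp only [Finset.mem_insert, forall_eq_or_imp]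
      exact ⟨fun h ↦ hgρ₀ (by rw [hgF, h, mul_zero]), hFT⟩
    · rw [Finset.prod_insert hρ₀, hfg, hgF, mul_assoc]
      congr 2
      exact Finset.prod_congr rfl fun ρ hρ ↦ by
        rw [analyticOrderNatAt, analyticOrderNatAt, hord ρ hρ]

theorem AnalyticOnNhd.finite_inter_setOf_eq_zero {U K : Set 𝕜} (hf : AnalyticOnNhd 𝕜 f U)
    (hU : IsPreconnected U) {x : 𝕜} (hx : x ∈ U) (hfx : f x ≠ 0) (hK : IsCompact K)
    (hKU : K ⊆ U) : (K ∩ {z | f z = 0}).Finite := by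
  have hne : ∀ᶠ z in codiscreteWithin U, f z ≠ 0 :=
    (hf.eqOn_zero_or_eventually_ne_zero_of_preconnected hU).resolve_left fun h ↦ hfx (h hx)
  simpa [sdiff_eq, compl_ofPred] using
    hK.finite_sdiff_of_mem_codiscreteWithin (codiscreteWithin_mono hKU hne)

theorem logDeriv_prod_pow_sub_mul {T : Finset 𝕜} {m : 𝕜 → ℕ} {F : 𝕜 → 𝕜} {s : 𝕜} (hs : s ∉ T)
    (hF : DifferentiableAt 𝕜 F s) (hFs : F s ≠ 0) :
    logDeriv (fun z ↦ (∏ ρ ∈ T, (z - ρ) ^ m ρ) * F z) s =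
      ∑ ρ ∈ T, (m ρ : 𝕜) / (s - ρ) + logDeriv F s := by
  have hsρ : ∀ ρ ∈ T, s - ρ ≠ 0 := fun ρ hρ ↦ sub_ne_zero.2 (ne_of_mem_of_not_mem hρ hs).symm
  have hP : ∏ ρ ∈ T, (s - ρ) ^ m ρ ≠ 0 :=
    Finset.prod_ne_zero_iff.2 fun ρ hρ ↦ pow_ne_zero _ (hsρ ρ hρ)
  rw [logDeriv_mul s hP hFs (by fun_prop) hF,
    logDeriv_prod (f := fun ρ z ↦ (z - ρ) ^ m ρ) (fun ρ hρ ↦ pow_ne_zero _ (hsρ ρ hρ))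
      (fun ρ _ ↦ by fun_prop)]
  congr 1
  refine Finset.sum_congr rfl fun ρ _ ↦ ?_
  rw [logDeriv_fun_pow (by fun_prop), logDeriv_apply, deriv_sub_const, deriv_id'', mul_one_div]

theorem norm_prod_pow_sub_le {T : Finset 𝕜} {m : 𝕜 → ℕ} {a b : 𝕜}
    (h : ∀ ρ ∈ T, ‖a - ρ‖ ≤ ‖b - ρ‖) :
    ‖∏ ρ ∈ T, (a - ρ) ^ m ρ‖ ≤ ‖∏ ρ ∈ T, (b - ρ) ^ m ρ‖ := by
  simp only [norm_prod, norm_pow]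
  exact Finset.prod_le_prod (fun _ _ ↦ by positivity) fun ρ hρ ↦
    pow_le_pow_left₀ (norm_nonneg _) (h ρ hρ) _

end

namespace Complex

theorem norm_le_of_eq_mul_of_norm_le_on_sphere {f P F : ℂ → ℂ} {c : ℂ} {r K : ℝ} (hr : 0 < r)
    (hK : 0 ≤ K) (hF : DiffContOnCl ℂ F (ball c r)) (hfPF : ∀ z, f z = P z * F z)
    (hf : ∀ z ∈ sphere c r, ‖f z‖ ≤ K * ‖f c‖) (hPc : P c ≠ 0)
    (hP : ∀ z ∈ sphere c r, ‖P c‖ ≤ ‖P z‖) {z : ℂ} (hz : z ∈ closedBall c r) :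
    ‖F z‖ ≤ K * ‖F c‖ := by
  refine norm_le_of_forall_mem_frontier_norm_le isBounded_ball hF (fun w hw ↦ ?_)
    (by rwa [closure_ball c hr.ne'])
  rw [frontier_ball c hr.ne'] at hw
  have hPw : 0 < ‖P w‖ := (norm_pos_iff.2 hPc).trans_le (hP w hw)
  refine le_of_mul_le_mul_left ?_ hPw
  calc ‖P w‖ * ‖F w‖ = ‖f w‖ := by rw [hfPF, norm_mul]
    _ ≤ K * (‖P c‖ * ‖F c‖) := by rw [← norm_mul, ← hfPF]; exact hf w hw
    _ ≤ K * (‖P w‖ * ‖F c‖) := by gcongr; exact hP w hw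
    _ = ‖P w‖ * (K * ‖F c‖) := by ring

theorem exists_hasDerivAt_logDeriv_of_ne_zero {F : ℂ → ℂ} {c : ℂ} {R : ℝ}
    (hF : DifferentiableOn ℂ F (ball c R)) (hF0 : ∀ z ∈ ball c R, F z ≠ 0) :
    ∃ h : ℂ → ℂ, h c = 0 ∧ (∀ z ∈ ball c R, HasDerivAt h (logDeriv F z) z) ∧
      ∀ z ∈ ball c R, F c * exp (h z) = F z := by
  have hlog : DifferentiableOn ℂ (logDeriv F) (ball c R) :=
    (hF.deriv isOpen_ball).div hF hF0
  obtain ⟨h, hc, hh⟩ := hlog.isExactOn_ball.with_val_at c 0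
  refine ⟨h, hc, hh, fun z hz ↦ ?_⟩
  have hΦ : ∀ w ∈ ball c R, HasDerivAt (fun w ↦ F w * exp (-h w)) 0 w := fun w hw ↦ by
    have hFw := (hF.differentiableAt (isOpen_ball.mem_nhds hw)).hasDerivAt
    refine (hFw.mul (hh w hw).neg.cexp).congr_deriv ?_
    rw [logDeriv_apply]
    field_simp [hF0 w hw]
    ring
  have hconst := isOpen_ball.is_const_of_deriv_eq_zero (convex_ball c R).isPreconnected
    (fun w hw ↦ (hΦ w hw).differentiableAt.differentiableWithinAt)
    (fun w hw ↦ (hΦ w hw).deriv) hz (mem_ball_self (pos_of_mem_ball hz))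
  simp only [hc, neg_zero, exp_zero, mul_one] at hconst
  rw [← hconst, mul_assoc, ← exp_add, neg_add_cancel, exp_zero, mul_one]

theorem norm_le_six_mul_of_re_le {h : ℂ → ℂ} {c : ℂ} {R M : ℝ} (hM : 0 < M)
    (hd : DifferentiableOn ℂ h (ball c R)) (hc : h c = 0) (hre : ∀ z ∈ ball c R, (h z).re ≤ M)
    {z : ℂ} (hz : z ∈ ball c (3 * R / 4)) : ‖h z‖ ≤ 6 * M := by
  rw [mem_ball, dist_eq_norm] at hz
  have hR : 0 < R := by linarith [norm_nonneg (z - c)]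
  have hmaps : MapsTo (fun w ↦ c + w) (ball 0 R) (ball c R) := fun w hw ↦ by
    simpa [mem_ball, dist_eq_norm] using hw
  have hBC := borelCaratheodory_zero (f := fun w ↦ h (c + w)) (z := z - c) hM
    (hd.comp (by fun_prop) hmaps) (fun w hw ↦ hre _ (hmaps hw)) hR
    (by rw [mem_ball, dist_zero_right]; linarith) (by simpa using hc)
  simp only [add_sub_cancel] at hBC
  refine hBC.trans ?_
  rw [div_le_iff₀ (by linarith)]
  nlinarith

theorem norm_deriv_le_of_re_le {h : ℂ → ℂ} {c : ℂ} {R M : ℝ} (hM : 0 < M) (hR : 0 < R)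
    (hd : DifferentiableOn ℂ h (ball c R)) (hc : h c = 0) (hre : ∀ z ∈ ball c R, (h z).re ≤ M)
    {z : ℂ} (hz : z ∈ closedBall c (R / 2)) : ‖deriv h z‖ ≤ 48 * M / R := by
  rw [mem_closedBall] at hz
  have hsub : ball z (R / 4) ⊆ ball c (3 * R / 4) := ball_subset_ball' (by linarith)
  have hbound := fun w (hw : w ∈ ball z (R / 4)) ↦ norm_le_six_mul_of_re_le hM hd hc hre (hsub hw)
  have hmaps : MapsTo h (ball z (R / 4)) (closedBall (h z) (12 * M)) := fun w hw ↦ by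
    rw [mem_closedBall, dist_eq_norm]
    linarith [norm_sub_le (h w) (h z), hbound w hw, hbound z (mem_ball_self (by positivity))]
  calc ‖deriv h z‖ ≤ 12 * M / (R / 4) :=
        norm_deriv_le_div_of_mapsTo_ball (hd.mono (hsub.trans (ball_subset_ball (by linarith))))
          hmaps (by positivity)
    _ = 48 * M / R := by field_simp; ring

theorem norm_logDeriv_le_of_norm_le_exp {F : ℂ → ℂ} {c : ℂ} {R M : ℝ} (hM : 0 < M) (hR : 0 < R)
    (hF : DifferentiableOn ℂ F (ball c R)) (hF0 : ∀ z ∈ ball c R, F z ≠ 0)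
    (hFM : ∀ z ∈ ball c R, ‖F z‖ ≤ Real.exp M * ‖F c‖) {z : ℂ} (hz : z ∈ closedBall c (R / 2)) :
    ‖logDeriv F z‖ ≤ 48 * M / R := by
  obtain ⟨h, hc, hh, hexp⟩ := exists_hasDerivAt_logDeriv_of_ne_zero hF hF0
  have hre : ∀ w ∈ ball c R, (h w).re ≤ M := fun w hw ↦ by
    have hFc : 0 < ‖F c‖ := norm_pos_iff.2 (hF0 c (mem_ball_self hR))
    rw [← Real.exp_le_exp, ← mul_le_mul_iff_of_pos_right hFc, ← norm_exp, mul_comm, ← norm_mul,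
      hexp w hw]
    exact hFM w hw
  have hzR : z ∈ ball c R := closedBall_subset_ball (by linarith) hz
  rw [← (hh z hzR).deriv]
  exact norm_deriv_le_of_re_le hM hR (fun w hw ↦ (hh w hw).differentiableAt.differentiableWithinAt)
    hc hre hz

end Complex

theorem exists_eq_prod_pow_mul_of_norm_le_exp {f : ℂ → ℂ} {s₀ : ℂ} {r M : ℝ} (hr : 0 < r)
    (hf : AnalyticOnNhd ℂ f (closedBall s₀ r)) (hf₀ : f s₀ ≠ 0)
    (hfM : ∀ s ∈ closedBall s₀ r, ‖f s‖ ≤ Real.exp M * ‖f s₀‖) {T : Finset ℂ}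
    (hT : ∀ ρ, ρ ∈ T ↔ ‖ρ - s₀‖ ≤ r / 2 ∧ f ρ = 0) :
    ∃ F : ℂ → ℂ, AnalyticOnNhd ℂ F (closedBall s₀ r) ∧ (∀ z ∈ ball s₀ (r / 2), F z ≠ 0) ∧
      (∀ z ∈ closedBall s₀ r, ‖F z‖ ≤ Real.exp M * ‖F s₀‖) ∧
      ∀ z, f z = (∏ ρ ∈ T, (z - ρ) ^ analyticOrderNatAt f ρ) * F z := by
  have hs₀ : s₀ ∈ closedBall s₀ r := mem_closedBall_self hr.le
  have hTK : ↑T ⊆ closedBall s₀ r := fun ρ hρ ↦ by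
    rw [mem_closedBall, dist_eq_norm]
    linarith [((hT ρ).1 hρ).1]
  have hf₀_ord : analyticOrderAt f s₀ ≠ ⊤ := by
    simp [(hf s₀ hs₀).analyticOrderAt_eq_zero.2 hf₀]
  obtain ⟨F, hF, hFT, hfF⟩ := hf.exists_eq_prod_pow_analyticOrderNatAt_mul T hTK fun ρ hρ ↦
    hf.analyticOrderAt_ne_top_of_isPreconnected (convex_closedBall s₀ r).isPreconnected hs₀
      (hTK hρ) hf₀_ord
  refine ⟨F, hF, fun z hz ↦ ?_, fun z hz ↦ ?_, hfF⟩
  · by_cases hfz : f z = 0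
    · exact hFT z ((hT z).2 ⟨(mem_ball_iff_norm.1 hz).le, hfz⟩)
    · exact right_ne_zero_of_mul (hfF z ▸ hfz)
  refine norm_le_of_eq_mul_of_norm_le_on_sphere hr (Real.exp_nonneg M)
    (hF.differentiableOn.diffContOnCl_ball subset_rfl) hfF
    (fun w hw ↦ hfM w (sphere_subset_closedBall hw)) (left_ne_zero_of_mul (hfF s₀ ▸ hf₀))
    (fun w hw ↦ norm_prod_pow_sub_le fun ρ hρ ↦ ?_) hz
  rw [norm_sub_rev]
  linarith [mem_sphere_iff_norm.1 hw, ((hT ρ).1 hρ).1, norm_sub_le_norm_sub_add_norm_sub w ρ s₀]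

/-- Lemma B (Landau–Titchmarsh): if `f` is analytic on a neighborhood of the closed disk
`|s - s₀| ≤ r`, `f s₀ ≠ 0`, and `|f s| ≤ e^M |f s₀|` on the disk, then for `|s - s₀| ≤ r/4`
with `f s ≠ 0`, the logarithmic derivative `f'/f` is approximated, up to `A·M/r`, by the sum
of `m_ρ/(s - ρ)` over the zeros `ρ` of `f` with `|ρ - s₀| ≤ r/2`, counted with multiplicity. -/
theorem logDeriv_approx_by_zero_sum :
    ∃ A : ℝ, 0 < A ∧
      ∀ (s₀ : ℂ) (r M : ℝ) (f : ℂ → ℂ),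
        0 < r → 1 < M →
        (∃ U : Set ℂ, IsOpen U ∧ Metric.closedBall s₀ r ⊆ U ∧ AnalyticOnNhd ℂ f U) →
        f s₀ ≠ 0 →
        (∀ s : ℂ, ‖s - s₀‖ ≤ r →
          ‖f s‖ ≤ Real.exp M * ‖f s₀‖) →
        ∀ s : ℂ, ‖s - s₀‖ ≤ r / 4 → f s ≠ 0 →
          ‖deriv f s / f s -
              ∑ᶠ ρ ∈ {ρ : ℂ | ‖ρ - s₀‖ ≤ r / 2 ∧ f ρ = 0},
                (zeroOrder f ρ : ℂ) / (s - ρ)‖ < A * M / r := by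
  refine ⟨100, by norm_num, ?_⟩
  rintro s₀ r M f hr hM ⟨U, -, hKU, hfU⟩ hf₀ hfM s hs hfs
  have hf : AnalyticOnNhd ℂ f (closedBall s₀ r) := hfU.mono hKU
  have hZ : {ρ : ℂ | ‖ρ - s₀‖ ≤ r / 2 ∧ f ρ = 0}.Finite := by
    refine (hf.finite_inter_setOf_eq_zero (convex_closedBall s₀ r).isPreconnected
      (mem_closedBall_self hr.le) hf₀ (isCompact_closedBall s₀ (r / 2))
      (closedBall_subset_closedBall (by linarith))).subset fun ρ hρ ↦ ⟨?_, hρ.2⟩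
    rw [mem_closedBall, dist_eq_norm]
    exact hρ.1
  set T := hZ.toFinset
  have hT : ∀ ρ, ρ ∈ T ↔ ‖ρ - s₀‖ ≤ r / 2 ∧ f ρ = 0 := fun ρ ↦ hZ.mem_toFinset
  obtain ⟨F, hF, hF0, hFM, hfF⟩ := exists_eq_prod_pow_mul_of_norm_le_exp hr hf hf₀
    (fun z hz ↦ hfM z (by rwa [mem_closedBall, dist_eq_norm] at hz)) hT
  have hball : ball s₀ (r / 2) ⊆ closedBall s₀ r :=
    ball_subset_closedBall.trans (closedBall_subset_closedBall (by linarith))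
  have hs' : s ∈ closedBall s₀ (r / 2 / 2) := by rw [mem_closedBall, dist_eq_norm]; linarith
  have hlog : logDeriv f s = ∑ ρ ∈ T, (analyticOrderNatAt f ρ : ℂ) / (s - ρ) + logDeriv F s :=
    (congrArg (logDeriv · s) (funext hfF)).trans <|
      logDeriv_prod_pow_sub_mul (fun h ↦ hfs ((hT s).1 h).2)
        (hF s (hball (closedBall_subset_ball (by linarith) hs'))).differentiableAt
        (right_ne_zero_of_mul (hfF s ▸ hfs))
  have hsum : ∑ᶠ ρ ∈ {ρ : ℂ | ‖ρ - s₀‖ ≤ r / 2 ∧ f ρ = 0}, (zeroOrder f ρ : ℂ) / (s - ρ) =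
      ∑ ρ ∈ T, (analyticOrderNatAt f ρ : ℂ) / (s - ρ) := by
    rw [← hZ.coe_toFinset, finsum_mem_coe_finset]
    simp only [zeroOrder_eq_analyticOrderNatAt, T]
  rw [← logDeriv_apply, hlog, hsum, add_sub_cancel_left]
  calc ‖logDeriv F s‖ ≤ 48 * M / (r / 2) :=
        norm_logDeriv_le_of_norm_le_exp (by linarith) (by positivity)
          (hF.differentiableOn.mono hball) hF0 (fun z hz ↦ hFM z (hball hz)) hs'
    _ < 100 * M / r := by rw [div_div_eq_mul_div, div_lt_div_iff_of_pos_right hr]; linarith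
end

section
/- Let n ≥ 2 be an integer, ρ ∈ ℝ, u > 0 and m ≥ 1. For each k = 1, …, m let a_k ≥ 0 be a real shift, ε_k ∈ {+1, −1}, and let Z_{k,1}, Z_{k,2} be entire functions, neither identically zero, satisfying (with constants c₀ ≥ ρ + 1, d_k > 0, B_k > 0, C_k ∈ ℝ possibly depending on k): (1) for all real a < b there is K > 0 with |Z_{k,i}(σ + it)| ≤ exp(K(1 + |t|)^{n−1}) for a ≤ σ ≤ b; (2) every zero of Z_{k,1} and of Z_{k,2} with positive imaginary part lies on the line Re s = ρ; (3) the counting function N_k(t) of zeros of Z_{k,1}·Z_{k,2}, with multiplicity, with 0 < Im ≤ t satisfies N_k(t) = C_k·tⁿ + O(t^{n−1}); (4) |Z_{k,i}(c₀ + it)| ≥ d_k for t ≥ 1; (5) Z_{k,1}, Z_{k,2} have no zeros in {Re s ≥ c₀, Im s ≥ 1} and |Z_{k,i}′(s)/Z_{k,i}(s)| ≤ B_k there. Define F(s) = ∏_{k=1}^m (Z_{k,1}(s + a_k)/Z_{k,2}(s + a_k))^{ε_k}. Then there exist C′ > 0 and t₀ > 0 (with C′ depending also on u) such that for all s = σ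 + it with t ≥ t₀ and ρ + u ≤ σ ≤ t/2 + ρ: |F′(s)/F(s)| ≤ C′·t^{n−1}. -/
/-!
Fix one Selberg-type factor `Z` and a point `w = σ + iT` with `ρ + u ≤ σ ≤ c₀`. Since the zeros
in the upper half-plane lie on `Re s = ρ`, the disc of radius `c₀ - ρ - u/2` around `c₀ + iT` is
zero-free, so `Z` has a holomorphic logarithm there. Its real part `log ‖Z‖` exceeds its value at
the centre by `O(T^(n-1))`, by the growth hypothesis and the lower bound on `Re s = c₀`; the
Borel–Carathéodory inequality turns this into a bound on the logarithm itself on a smaller disc,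
and Cauchy's estimate bounds its derivative `Z'/Z` at `w`. To the right of `Re s = c₀`, `Z'/Z` is
bounded by hypothesis. Finally `F'/F` is a finite signed sum of such log-derivatives, shifted to
the right, which keeps them in the region where these bounds hold.
-/

open Complex Filter

open Metric Set Asymptotics

section LogDeriv

variable {𝕜 : Type*} [NontriviallyNormedField 𝕜]

theorem logDeriv_comp_add_const (f : 𝕜 → 𝕜) (x a : 𝕜) :
    logDeriv (fun z ↦ f (z + a)) x = logDeriv f (x + a) := by
  simp only [logDeriv_apply, deriv_comp_add_const]

theorem logDeriv_prod_zpow_div_comp_add {ι : Type*} (S : Finset ι) {f g : ι → 𝕜 → 𝕜}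
    (e : ι → ℤ) (a : ι → 𝕜) {x : 𝕜}
    (hf : ∀ i ∈ S, DifferentiableAt 𝕜 (f i) (x + a i))
    (hg : ∀ i ∈ S, DifferentiableAt 𝕜 (g i) (x + a i))
    (hf₀ : ∀ i ∈ S, f i (x + a i) ≠ 0) (hg₀ : ∀ i ∈ S, g i (x + a i) ≠ 0) :
    logDeriv (fun z ↦ ∏ i ∈ S, (f i (z + a i) / g i (z + a i)) ^ e i) x =
      ∑ i ∈ S, e i * (logDeriv (f i) (x + a i) - logDeriv (g i) (x + a i)) := by
  have hfa : ∀ i ∈ S, DifferentiableAt 𝕜 (fun z ↦ f i (z + a i)) x := fun i hi ↦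
    (hf i hi).comp x (differentiableAt_id.add_const _)
  have hga : ∀ i ∈ S, DifferentiableAt 𝕜 (fun z ↦ g i (z + a i)) x := fun i hi ↦
    (hg i hi).comp x (differentiableAt_id.add_const _)
  have hq₀ : ∀ i ∈ S, f i (x + a i) / g i (x + a i) ≠ 0 := fun i hi ↦
    div_ne_zero (hf₀ i hi) (hg₀ i hi)
  have hqa : ∀ i ∈ S, DifferentiableAt 𝕜 (fun z ↦ f i (z + a i) / g i (z + a i)) x :=
    fun i hi ↦ (hfa i hi).div (hga i hi) (hg₀ i hi)
  rw [logDeriv_prod (f := fun i z ↦ (f i (z + a i) / g i (z + a i)) ^ e i)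
    (fun i hi ↦ zpow_ne_zero _ (hq₀ i hi)) (fun i hi ↦ (hqa i hi).zpow (.inl (hq₀ i hi)))]
  refine Finset.sum_congr rfl fun i hi ↦ ?_
  rw [logDeriv_fun_zpow (hqa i hi),
    logDeriv_div x (hf₀ i hi) (hg₀ i hi) (hfa i hi) (hga i hi),
    logDeriv_comp_add_const, logDeriv_comp_add_const]

end LogDeriv

namespace Complex

theorem borelCaratheodory_ball {L : ℂ → ℂ} {c z : ℂ} {R A : ℝ}
    (hL : DifferentiableOn ℂ L (ball c R)) (hA : 0 < A)
    (hre : ∀ z ∈ ball c R, (L z - L c).re ≤ A) (hz : z ∈ ball c R) :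
    ‖L z - L c‖ ≤ 2 * A * dist z c / (R - dist z c) := by
  have hR : 0 < R := pos_of_mem_ball hz
  have hshift : DifferentiableOn ℂ (fun y ↦ L (c + y) - L c) (ball 0 R) := by
    refine (hL.comp (by fun_prop) fun y hy ↦ ?_).sub_const _
    simpa [mem_ball, dist_eq_norm] using hy
  have hmaps : MapsTo (fun y ↦ L (c + y) - L c) (ball 0 R) {w | w.re ≤ A} := fun y hy ↦
    hre _ (by simpa [mem_ball, dist_eq_norm] using hy)
  simpa [dist_eq_norm] using borelCaratheodory_zero hA hshift hmaps hR
    (z := z - c) (by simpa [mem_ball, dist_eq_norm] using hz) (by simp)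

-- Borel–Carathéodory on `ball c (r + δ)`, then Cauchy's estimate on `ball w δ`, `δ = (R - r) / 2`.
theorem norm_deriv_le_of_re_sub_le {L : ℂ → ℂ} {c w : ℂ} {r R A : ℝ}
    (hL : DifferentiableOn ℂ L (ball c R)) (hA : 0 < A)
    (hre : ∀ z ∈ ball c R, (L z - L c).re ≤ A) (hw : dist w c ≤ r) (hr : r < R) :
    ‖deriv L w‖ ≤ 16 * A * R / (R - r) ^ 2 := by
  set δ := (R - r) / 2
  have hδ : 0 < δ := by simp only [δ]; linarith
  have hsub : ball w δ ⊆ ball c (r + δ) := ball_subset_ball' (by linarith)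
  have hbound : ∀ z ∈ ball c (r + δ), ‖L z - L c‖ ≤ 2 * A * R / δ := by
    intro z hz
    have hzc : dist z c < r + δ := hz
    have hzR : z ∈ ball c R := ball_subset_ball (by simp only [δ]; linarith) hz
    have hR : 0 < R := pos_of_mem_ball hzR
    refine (borelCaratheodory_ball hL hA hre hzR).trans ?_
    gcongr
    · exact (mem_ball.1 hzR).le
    · simp only [δ] at hzc ⊢; linarith
  have hmaps : MapsTo L (ball w δ) (closedBall (L w) (2 * A * R / δ + 2 * A * R / δ)) := by
    intro z hz
    rw [mem_closedBall, dist_eq_norm, ← sub_sub_sub_cancel_right _ _ (L c)]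
    exact (norm_sub_le _ _).trans (add_le_add (hbound z (hsub hz))
      (hbound w (hsub (mem_ball_self hδ))))
  have hLw : DifferentiableOn ℂ L (ball w δ) :=
    hL.mono (hsub.trans (ball_subset_ball (by simp only [δ]; linarith)))
  refine (norm_deriv_le_div_of_mapsTo_ball hLw hmaps hδ).trans_eq ?_
  simp only [δ]
  field_simp
  ring

theorem exists_hasDerivAt_logDeriv_cexp_eq {Z : ℂ → ℂ} {c : ℂ} {R : ℝ}
    (hZ : DifferentiableOn ℂ Z (ball c R)) (hZ₀ : ∀ z ∈ ball c R, Z z ≠ 0) :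
    ∃ L : ℂ → ℂ, ∀ z ∈ ball c R, HasDerivAt L (logDeriv Z z) z ∧ exp (L z) = Z z := by
  rcases (ball c R).eq_empty_or_nonempty with hR | hR
  · exact ⟨0, by simp [hR]⟩
  have hc : c ∈ ball c R := mem_ball_self (nonempty_ball.1 hR)
  obtain ⟨L, hLc, hL⟩ : ∃ L, L c = log (Z c) ∧ ∀ z ∈ ball c R, HasDerivAt L (logDeriv Z z) z :=
    ((hZ.deriv isOpen_ball).div hZ hZ₀).isExactOn_ball.with_val_at c (log (Z c))
  have hLd : DifferentiableOn ℂ L (ball c R) := fun z hz ↦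
    (hL z hz).differentiableAt.differentiableWithinAt
  have hlog : EqOn (logDeriv (exp ∘ L)) (logDeriv Z) (ball c R) := fun z hz ↦ by
    rw [logDeriv_comp differentiableAt_exp (hL z hz).differentiableAt, logDeriv_exp,
      (hL z hz).deriv, Pi.one_apply, one_mul]
  obtain ⟨a, -, ha⟩ := (logDeriv_eqOn_iff (differentiable_exp.comp_differentiableOn hLd) hZ
    isOpen_ball (convex_ball c R).isPreconnected hZ₀ (fun _ _ ↦ exp_ne_zero _)).1 hlog
  have ha1 : a = 1 := by
    have := ha hc
    simp only [Function.comp_apply, hLc, exp_log (hZ₀ c hc), Pi.smul_apply, smul_eq_mul] at this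
    exact (mul_eq_right₀ (hZ₀ c hc)).1 this.symm
  refine ⟨L, fun z hz ↦ ⟨hL z hz, ?_⟩⟩
  simpa [ha1] using ha hz

theorem norm_logDeriv_le_of_log_norm_sub_le {Z : ℂ → ℂ} {c w : ℂ} {r R A : ℝ}
    (hZ : DifferentiableOn ℂ Z (ball c R)) (hZ₀ : ∀ z ∈ ball c R, Z z ≠ 0) (hA : 0 < A)
    (hle : ∀ z ∈ ball c R, Real.log ‖Z z‖ - Real.log ‖Z c‖ ≤ A) (hw : dist w c ≤ r)
    (hr : r < R) :
    ‖logDeriv Z w‖ ≤ 16 * A * R / (R - r) ^ 2 := by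
  obtain ⟨L, hL⟩ := exists_hasDerivAt_logDeriv_cexp_eq hZ hZ₀
  have hwR : w ∈ ball c R := mem_ball.2 (hw.trans_lt hr)
  have hc : c ∈ ball c R := mem_ball_self (pos_of_mem_ball hwR)
  have hLre : ∀ z ∈ ball c R, (L z).re = Real.log ‖Z z‖ := fun z hz ↦ by
    rw [← (hL z hz).2, norm_exp, Real.log_exp]
  have hre : ∀ z ∈ ball c R, (L z - L c).re ≤ A := fun z hz ↦ by
    simpa only [sub_re, hLre z hz, hLre c hc] using hle z hz
  rw [← (hL w hwR).1.deriv]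
  exact norm_deriv_le_of_re_sub_le
    (fun z hz ↦ (hL z hz).1.differentiableAt.differentiableWithinAt) hA hre hw hr

end Complex

def atImTopRightOf (σ₀ : ℝ) : Filter ℂ :=
  comap im atTop ⊓ 𝓟 {s | σ₀ ≤ s.re}

theorem eventually_atImTopRightOf {σ₀ : ℝ} {p : ℂ → Prop} :
    (∀ᶠ s in atImTopRightOf σ₀, p s) ↔ ∃ T, ∀ s : ℂ, σ₀ ≤ s.re → T ≤ s.im → p s := by
  simp only [atImTopRightOf, eventually_inf_principal, eventually_comap, eventually_atTop,
    mem_ofPred_eq]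
  constructor
  · rintro ⟨T, hT⟩
    exact ⟨T, fun s hre him ↦ hT _ him s rfl hre⟩
  · rintro ⟨T, hT⟩
    exact ⟨T, fun t ht s hs hre ↦ hT s hre (hs ▸ ht)⟩

theorem tendsto_add_ofReal_atImTopRightOf {σ₀ a : ℝ} (ha : 0 ≤ a) :
    Tendsto (fun s : ℂ ↦ s + a) (atImTopRightOf σ₀) (atImTopRightOf σ₀) := by
  refine tendsto_iff_eventually.2 fun p hp ↦ ?_
  obtain ⟨T, hT⟩ := eventually_atImTopRightOf.1 hp
  exact eventually_atImTopRightOf.2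
    ⟨T, fun s hre him ↦ hT _ (by simp only [add_re, ofReal_re]; linarith) (by simpa using him)⟩

theorem eventually_ne_zero_atImTopRightOf {Z : ℂ → ℂ} {ρ u : ℝ} (hu : 0 < u)
    (hline : ∀ s : ℂ, 0 < s.im → Z s = 0 → s.re = ρ) :
    ∀ᶠ s in atImTopRightOf (ρ + u), Z s ≠ 0 :=
  eventually_atImTopRightOf.2 ⟨1, fun s hre him hZs ↦ by linarith [hline s (by linarith) hZs]⟩

theorem Asymptotics.IsBigO.exists_bound_atImTopRightOf {f : ℂ → ℂ} {σ₀ : ℝ} {k : ℕ}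
    (h : f =O[atImTopRightOf σ₀] fun s ↦ s.im ^ k) :
    ∃ C > (0 : ℝ), ∃ t₀ > (0 : ℝ), ∀ σ t : ℝ, t₀ ≤ t → σ₀ ≤ σ →
      ‖f (σ + t * I)‖ ≤ C * t ^ k := by
  obtain ⟨C, hC, hbound⟩ := h.exists_pos
  obtain ⟨T, hT⟩ := eventually_atImTopRightOf.1 hbound.bound
  refine ⟨C, hC, max T 1, by positivity, fun σ t ht hσ ↦ ?_⟩
  have ht₀ : 0 < t := one_pos.trans_le (le_of_max_le_right ht)
  simpa [abs_of_pos ht₀] using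
    hT (σ + t * I) (by simpa using hσ) (by simpa using le_of_max_le_left ht)

section Strip

variable {n : ℕ} {Z : ℂ → ℂ} {ρ c₀ u d K : ℝ}

theorem exists_norm_logDeriv_le_mul_im_pow_of_strip (hZ : Differentiable ℂ Z) (hu : 0 < u)
    (hd : 0 < d)
    (hgrow : ∀ σ t : ℝ, ρ ≤ σ → σ ≤ 2 * c₀ - ρ →
      ‖Z (σ + t * I)‖ ≤ Real.exp (K * (1 + |t|) ^ (n - 1)))
    (hline : ∀ s : ℂ, 0 < s.im → Z s = 0 → s.re = ρ)
    (hlow : ∀ t : ℝ, 1 ≤ t → d ≤ ‖Z (c₀ + t * I)‖) :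
    ∃ C, ∀ w : ℂ, ρ + u ≤ w.re → w.re ≤ c₀ → 1 ≤ w.im → c₀ - ρ ≤ w.im →
      ‖logDeriv Z w‖ ≤ C * w.im ^ (n - 1) := by
  -- The disc of radius `R` about `c₀ + iT` lies in `ρ < Re s` and, as `T ≥ c₀ - ρ > R`, in the
  -- upper half-plane, so it is zero-free; `w` lies at distance `≤ R - u / 2` from its centre.
  set R := c₀ - ρ - u / 2 with hR_def
  set B := |K| * (2 + R) ^ (n - 1) + |Real.log d| + 1
  refine ⟨64 * B * R / u ^ 2, fun w hre hre' him him' ↦ ?_⟩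
  set T := w.im
  set c : ℂ := c₀ + T * I
  have hR : 0 < R := by linarith
  have hTpow : 1 ≤ T ^ (n - 1) := one_le_pow₀ him
  have hball : ∀ z ∈ ball c R, |z.re - c₀| < R ∧ |z.im - T| < R := fun z hz ↦ by
    have hz : ‖z - c‖ < R := mem_ball_iff_norm.1 hz
    constructor
    · simpa [c] using (abs_re_le_norm (z - c)).trans_lt hz
    · simpa [c] using (abs_im_le_norm (z - c)).trans_lt hz
  have hZ₀ : ∀ z ∈ ball c R, Z z ≠ 0 := fun z hz hZz ↦ by
    obtain ⟨hzre, hzim⟩ := abs_lt.1 (hball z hz).1, abs_lt.1 (hball z hz).2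
    have := hline z (by linarith) hZz
    linarith
  have hupper : ∀ z ∈ ball c R, Real.log ‖Z z‖ ≤ |K| * (2 + R) ^ (n - 1) * T ^ (n - 1) := by
    intro z hz
    obtain ⟨hzre, hzim⟩ := abs_lt.1 (hball z hz).1, abs_lt.1 (hball z hz).2
    have hgz := hgrow z.re z.im (by linarith) (by linarith)
    rw [re_add_im, ← Real.log_le_iff_le_exp (norm_pos_iff.2 (hZ₀ z hz))] at hgz
    have hzim' : 1 + |z.im| ≤ (2 + R) * T := by
      rw [abs_of_pos (by linarith)]; nlinarith
    calc Real.log ‖Z z‖ ≤ K * (1 + |z.im|) ^ (n - 1) := hgz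
      _ ≤ |K| * ((2 + R) * T) ^ (n - 1) := by
        gcongr
        · exact le_abs_self K
      _ = |K| * (2 + R) ^ (n - 1) * T ^ (n - 1) := by rw [mul_pow, mul_assoc]
  have hcenter : -Real.log ‖Z c‖ ≤ |Real.log d| * T ^ (n - 1) := by
    have := Real.log_le_log hd (hlow T him)
    nlinarith [neg_abs_le (Real.log d), abs_nonneg (Real.log d)]
  have hwc : dist w c ≤ R - u / 2 := by
    rw [dist_eq_norm]
    have : w - c = ((w.re - c₀ : ℝ) : ℂ) := by
      apply Complex.ext <;> simp [c, T]
    rw [this, norm_real, Real.norm_eq_abs, abs_le]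
    constructor <;> linarith
  have hle : ∀ z ∈ ball c R, Real.log ‖Z z‖ - Real.log ‖Z c‖ ≤ B * T ^ (n - 1) := by
    intro z hz
    simp only [B]
    linarith [hupper z hz]
  have hmain := Complex.norm_logDeriv_le_of_log_norm_sub_le hZ.differentiableOn hZ₀
    (by positivity) hle hwc (by linarith)
  rw [show R - (R - u / 2) = u / 2 by ring] at hmain
  refine hmain.trans_eq ?_
  field_simp
  ring

theorem isBigO_logDeriv_atImTopRightOf {B : ℝ}
    (hZ : Differentiable ℂ Z) (hu : 0 < u) (hd : 0 < d)
    (hgrow : ∀ σ t : ℝ, ρ ≤ σ → σ ≤ 2 * c₀ - ρ →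
      ‖Z (σ + t * I)‖ ≤ Real.exp (K * (1 + |t|) ^ (n - 1)))
    (hline : ∀ s : ℂ, 0 < s.im → Z s = 0 → s.re = ρ)
    (hlow : ∀ t : ℝ, 1 ≤ t → d ≤ ‖Z (c₀ + t * I)‖)
    (hright : ∀ s : ℂ, c₀ ≤ s.re → 1 ≤ s.im → ‖deriv Z s / Z s‖ ≤ B) :
    logDeriv Z =O[atImTopRightOf (ρ + u)] fun s ↦ s.im ^ (n - 1) := by
  obtain ⟨C, hC⟩ := exists_norm_logDeriv_le_mul_im_pow_of_strip hZ hu hd hgrow hline hlow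
  refine IsBigO.of_bound (max C B) (eventually_atImTopRightOf.2 ⟨max 1 (c₀ - ρ), ?_⟩)
  intro s hre him
  have him₁ : 1 ≤ s.im := le_of_max_le_left him
  rw [norm_pow, Real.norm_of_nonneg (by linarith)]
  rcases le_or_gt s.re c₀ with hs | hs
  · exact (hC s hre hs him₁ (le_of_max_le_right him)).trans (by gcongr; exact le_max_left C B)
  · have hB := hright s hs.le him₁
    calc ‖logDeriv Z s‖ ≤ max C B := hB.trans (le_max_right C B)
      _ ≤ max C B * s.im ^ (n - 1) :=
        le_mul_of_one_le_right ((norm_nonneg _).trans (hB.trans (le_max_right C B)))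
          (one_le_pow₀ him₁)

end Strip

theorem isBigO_logDeriv_prod_zpow_div_comp_add {ι : Type*} (S : Finset ι) {f g : ι → ℂ → ℂ}
    (e : ι → ℤ) {a : ι → ℝ} (ha : ∀ i, 0 ≤ a i) {σ₀ : ℝ} {G : ℝ → ℝ}
    (hf : ∀ i ∈ S, Differentiable ℂ (f i)) (hg : ∀ i ∈ S, Differentiable ℂ (g i))
    (hf₀ : ∀ i ∈ S, ∀ᶠ s in atImTopRightOf σ₀, f i s ≠ 0)
    (hg₀ : ∀ i ∈ S, ∀ᶠ s in atImTopRightOf σ₀, g i s ≠ 0)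
    (hfO : ∀ i ∈ S, logDeriv (f i) =O[atImTopRightOf σ₀] fun s ↦ G s.im)
    (hgO : ∀ i ∈ S, logDeriv (g i) =O[atImTopRightOf σ₀] fun s ↦ G s.im) :
    logDeriv (fun s ↦ ∏ i ∈ S, (f i (s + a i) / g i (s + a i)) ^ e i)
      =O[atImTopRightOf σ₀] fun s ↦ G s.im := by
  have hshift := fun i ↦ tendsto_add_ofReal_atImTopRightOf (σ₀ := σ₀) (ha i)
  have heq : (fun s ↦ ∑ i ∈ S, (e i : ℂ) * (logDeriv (f i) (s + a i) - logDeriv (g i) (s + a i)))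
      =ᶠ[atImTopRightOf σ₀] logDeriv (fun s ↦ ∏ i ∈ S, (f i (s + a i) / g i (s + a i)) ^ e i) := by
    have hne : ∀ᶠ s in atImTopRightOf σ₀, ∀ i ∈ S, f i (s + a i) ≠ 0 ∧ g i (s + a i) ≠ 0 :=
      (eventually_all_finset S).2 fun i hi ↦
        ((hshift i).eventually (hf₀ i hi)).and ((hshift i).eventually (hg₀ i hi))
    filter_upwards [hne] with s hs
    exact (logDeriv_prod_zpow_div_comp_add S e (fun i ↦ (a i : ℂ))
      (fun i hi ↦ (hf i hi).differentiableAt) (fun i hi ↦ (hg i hi).differentiableAt)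
      (fun i hi ↦ (hs i hi).1) (fun i hi ↦ (hs i hi).2)).symm
  refine IsBigO.congr' (IsBigO.fun_sum fun i hi ↦ ?_) heq EventuallyEq.rfl
  simpa [Function.comp_def] using
    (((hfO i hi).sub (hgO i hi)).comp_tendsto (hshift i)).const_mul_left (e i : ℂ)

theorem logDeriv_ruelle_type_bound_general (n : ℕ) (ρ u c₀ : ℝ) (hu : 0 < u)
    (hc₀ : ρ + 1 ≤ c₀) (m : ℕ)
    (a : Fin m → ℝ) (ha : ∀ k, 0 ≤ a k)
    (ε : Fin m → ℤ)
    (d B : Fin m → ℝ) (hd : ∀ k, 0 < d k)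
    (Z₁ Z₂ : Fin m → ℂ → ℂ)
    (hZ₁ : ∀ k, AnalyticOnNhd ℂ (Z₁ k) Set.univ)
    (hZ₂ : ∀ k, AnalyticOnNhd ℂ (Z₂ k) Set.univ)
    (hgrowth : ∀ k, ∀ a' b' : ℝ, a' < b' → ∃ K > (0 : ℝ), ∀ σ t : ℝ, a' ≤ σ → σ ≤ b' →
      ‖Z₁ k (σ + t * I)‖ ≤ Real.exp (K * (1 + |t|) ^ (n - 1)) ∧
      ‖Z₂ k (σ + t * I)‖ ≤ Real.exp (K * (1 + |t|) ^ (n - 1)))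
    (hline : ∀ k, ∀ s : ℂ, 0 < s.im → (Z₁ k s = 0 ∨ Z₂ k s = 0) → s.re = ρ)
    (hlow : ∀ k, ∀ t : ℝ, 1 ≤ t →
      d k ≤ ‖Z₁ k (c₀ + t * I)‖ ∧ d k ≤ ‖Z₂ k (c₀ + t * I)‖)
    (hright : ∀ k, ∀ s : ℂ, c₀ ≤ s.re → 1 ≤ s.im →
      Z₁ k s ≠ 0 ∧ Z₂ k s ≠ 0 ∧
      ‖deriv (Z₁ k) s / Z₁ k s‖ ≤ B k ∧
      ‖deriv (Z₂ k) s / Z₂ k s‖ ≤ B k)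
    (F : ℂ → ℂ)
    (hF : ∀ s : ℂ, F s = ∏ k : Fin m, (Z₁ k (s + a k) / Z₂ k (s + a k)) ^ ε k) :
    ∃ C' > (0 : ℝ), ∃ t₀ > (0 : ℝ), ∀ σ t : ℝ, t₀ ≤ t → ρ + u ≤ σ → σ ≤ t / 2 + ρ →
      ‖deriv F (σ + t * I) / F (σ + t * I)‖ ≤ C' * t ^ (n - 1) := by
  choose K _ hgrow using fun k ↦ hgrowth k ρ (2 * c₀ - ρ) (by linarith)
  have hZ₁d k : Differentiable ℂ (Z₁ k) := differentiableOn_univ.1 (hZ₁ k).differentiableOn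
  have hZ₂d k : Differentiable ℂ (Z₂ k) := differentiableOn_univ.1 (hZ₂ k).differentiableOn
  have hline₁ k s (hs : 0 < s.im) (h : Z₁ k s = 0) : s.re = ρ := hline k s hs (.inl h)
  have hline₂ k s (hs : 0 < s.im) (h : Z₂ k s = 0) : s.re = ρ := hline k s hs (.inr h)
  have hO₁ k : logDeriv (Z₁ k) =O[atImTopRightOf (ρ + u)] fun s ↦ s.im ^ (n - 1) :=
    isBigO_logDeriv_atImTopRightOf (hZ₁d k) hu (hd k) (fun σ t h₁ h₂ ↦ (hgrow k σ t h₁ h₂).1)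
      (hline₁ k) (fun t ht ↦ (hlow k t ht).1) (fun s h₁ h₂ ↦ (hright k s h₁ h₂).2.2.1)
  have hO₂ k : logDeriv (Z₂ k) =O[atImTopRightOf (ρ + u)] fun s ↦ s.im ^ (n - 1) :=
    isBigO_logDeriv_atImTopRightOf (hZ₂d k) hu (hd k) (fun σ t h₁ h₂ ↦ (hgrow k σ t h₁ h₂).2)
      (hline₂ k) (fun t ht ↦ (hlow k t ht).2) (fun s h₁ h₂ ↦ (hright k s h₁ h₂).2.2.2)
  have hFO : logDeriv F =O[atImTopRightOf (ρ + u)] fun s ↦ s.im ^ (n - 1) := by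
    rw [funext hF]
    exact isBigO_logDeriv_prod_zpow_div_comp_add Finset.univ ε ha (fun k _ ↦ hZ₁d k)
      (fun k _ ↦ hZ₂d k) (fun k _ ↦ eventually_ne_zero_atImTopRightOf hu (hline₁ k))
      (fun k _ ↦ eventually_ne_zero_atImTopRightOf hu (hline₂ k)) (fun k _ ↦ hO₁ k)
      (fun k _ ↦ hO₂ k)
  obtain ⟨C', hC', t₀, ht₀, hbound⟩ := hFO.exists_bound_atImTopRightOf
  exact ⟨C', hC', t₀, ht₀, fun σ t ht hσ _ ↦ hbound σ t ht hσ⟩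

/-- Theorem 4.1(b) in abstract form: for a finite alternating product
`F(s) = ∏ₖ (Z_{k,1}(s+aₖ)/Z_{k,2}(s+aₖ))^{εₖ}` of shifted Selberg-type quotients, one has
`|F'(s)/F(s)| = O(t^{n-1})` for `s = σ + it` with `ρ + u ≤ σ ≤ t/2 + ρ` and `t` large. -/
theorem logDeriv_ruelle_type_bound (n : ℕ) (hn : 2 ≤ n) (ρ u c₀ : ℝ) (hu : 0 < u)
    (hc₀ : ρ + 1 ≤ c₀) (m : ℕ) (hm : 1 ≤ m)
    (a : Fin m → ℝ) (ha : ∀ k, 0 ≤ a k)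
    (ε : Fin m → ℤ) (hε : ∀ k, ε k = 1 ∨ ε k = -1)
    (d B : Fin m → ℝ) (C : Fin m → ℝ) (hd : ∀ k, 0 < d k) (hB : ∀ k, 0 < B k)
    (Z₁ Z₂ : Fin m → ℂ → ℂ)
    (hZ₁ : ∀ k, AnalyticOnNhd ℂ (Z₁ k) Set.univ)
    (hZ₂ : ∀ k, AnalyticOnNhd ℂ (Z₂ k) Set.univ)
    (hZ₁ne : ∀ k, ∃ z, Z₁ k z ≠ 0) (hZ₂ne : ∀ k, ∃ z, Z₂ k z ≠ 0)
    (hgrowth : ∀ k, ∀ a' b' : ℝ, a' < b' → ∃ K > (0 : ℝ), ∀ σ t : ℝ, a' ≤ σ → σ ≤ b' →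
      ‖Z₁ k (σ + t * I)‖ ≤ Real.exp (K * (1 + |t|) ^ (n - 1)) ∧
      ‖Z₂ k (σ + t * I)‖ ≤ Real.exp (K * (1 + |t|) ^ (n - 1)))
    (hline : ∀ k, ∀ s : ℂ, 0 < s.im → (Z₁ k s = 0 ∨ Z₂ k s = 0) → s.re = ρ)
    (N : Fin m → ℝ → ℝ)
    (hNdef : ∀ k, ∀ t : ℝ, N k t =
      ∑ᶠ s ∈ {s : ℂ | 0 < s.im ∧ s.im ≤ t ∧ (Z₁ k s = 0 ∨ Z₂ k s = 0)},
        ((zeroOrder (Z₁ k) s + zeroOrder (Z₂ k) s : ℕ) : ℝ))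
    (hN : ∀ k, (fun t : ℝ => N k t - C k * t ^ n) =O[atTop] fun t : ℝ => t ^ (n - 1))
    (hlow : ∀ k, ∀ t : ℝ, 1 ≤ t →
      d k ≤ ‖Z₁ k (c₀ + t * I)‖ ∧ d k ≤ ‖Z₂ k (c₀ + t * I)‖)
    (hright : ∀ k, ∀ s : ℂ, c₀ ≤ s.re → 1 ≤ s.im →
      Z₁ k s ≠ 0 ∧ Z₂ k s ≠ 0 ∧
      ‖deriv (Z₁ k) s / Z₁ k s‖ ≤ B k ∧
      ‖deriv (Z₂ k) s / Z₂ k s‖ ≤ B k)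
    (F : ℂ → ℂ)
    (hF : ∀ s : ℂ, F s = ∏ k : Fin m, (Z₁ k (s + a k) / Z₂ k (s + a k)) ^ ε k) :
    ∃ C' > (0 : ℝ), ∃ t₀ > (0 : ℝ), ∀ σ t : ℝ, t₀ ≤ t → ρ + u ≤ σ → σ ≤ t / 2 + ρ →
      ‖deriv F (σ + t * I) / F (σ + t * I)‖ ≤ C' * t ^ (n - 1) :=
  logDeriv_ruelle_type_bound_general n ρ u c₀ hu hc₀ m a ha ε d B hd Z₁ Z₂ hZ₁ hZ₂ hgrowth hline
    hlow hright F hF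
end
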